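/- Let G_n be a sequence of graphs with maximum degree bounded by Δ for all n, and H a connected graph. If p_n^{|V(H)|} N(H,G_n) → ∞, then the variance of T(H,G_n) satisfies Var[T(H,G_n)] ≥ c(H) · p_n^{|V(H)|} N(H,G_n) for a constant c(H) > 0 depending only on H (assuming p_n bounded away from 1). -/

import Mathlib

open Finset

noncomputable section

/-- `M_H(s) = ∏_{(i,j)∈E(H)} a_{s_i s_j}`: indicator that the tuple `s` of distinct
vertices maps every edge of `H` to an edge of `G`. -/
def MH {k : ℕ} {V : Type*} (H : SimpleGraph (Fin k)) [DecidableRel H.Adj]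
    (G : SimpleGraph V) [DecidableRel G.Adj] (s : Fin k ↪ V) : ℝ :=
  ∏ i : Fin k, ∏ j : Fin k,
    if H.Adj i j then (if G.Adj (s i) (s j) then 1 else 0) else 1

/-- `N(H,G) = |Aut(H)|⁻¹ ∑_s M_H(s)`: the number of copies of `H` in `G`. -/
def NHG {k : ℕ} {V : Type*} [Fintype V] [DecidableEq V] (H : SimpleGraph (Fin k))
    [DecidableRel H.Adj] (G : SimpleGraph V) [DecidableRel G.Adj] : ℝ :=
  (Nat.card (H ≃g H) : ℝ)⁻¹ * ∑ s : Fin k ↪ V, MH H G s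

/-- `t_H(A)`: the number of copies of `H` in `G` whose vertex set contains `A`. -/
def tH {k : ℕ} {V : Type*} [Fintype V] [DecidableEq V] (H : SimpleGraph (Fin k))
    [DecidableRel H.Adj] (G : SimpleGraph V) [DecidableRel G.Adj] (A : Finset V) : ℝ :=
  (Nat.card (H ≃g H) : ℝ)⁻¹ *
    ∑ s ∈ Finset.univ.filter (fun s : Fin k ↪ V => A ⊆ Finset.univ.map s), MH H G s

/-- Probability weight of a sampling outcome `ω : V → Bool` when each vertex is retained
independently with probability `p`. -/
def wt {V : Type*} [Fintype V] (p : ℝ) (ω : V → Bool) : ℝ :=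
  ∏ v : V, if ω v then p else 1 - p

/-- Expectation under the subgraph sampling model with sampling ratio `p`. -/
def expec {V : Type*} [Fintype V] [DecidableEq V] (p : ℝ) (f : (V → Bool) → ℝ) : ℝ :=
  ∑ ω : V → Bool, wt p ω * f ω

/-- `X_s = ∏_{u ∈ s̄} X_u`: indicator that all entries of the tuple `s` are sampled. -/
def Xs {k : ℕ} {V : Type*} (s : Fin k ↪ V) (ω : V → Bool) : ℝ :=
  ∏ u ∈ Finset.univ.map s, if ω u then 1 else 0

/-- `T(H,G) = |Aut(H)|⁻¹ ∑_s M_H(s) X_s`: the number of copies of `H` spanned by the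
sampled vertices. -/
def TH {k : ℕ} {V : Type*} [Fintype V] [DecidableEq V] (H : SimpleGraph (Fin k))
    [DecidableRel H.Adj] (G : SimpleGraph V) [DecidableRel G.Adj] (ω : V → Bool) : ℝ :=
  (Nat.card (H ≃g H) : ℝ)⁻¹ * ∑ s : Fin k ↪ V, MH H G s * Xs s ω

/-!
Expanding the square, `Var T = |Aut H|⁻² ∑_{s,s'} M_H(s) M_H(s') (p^{|s̄ ∪ s̄'|} - p^{2k})`,
because `X_s X_{s'}` is the indicator that `s̄ ∪ s̄'` is sampled. For `0 ≤ p ≤ 1` every term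
is nonnegative, since `|s̄ ∪ s̄'| ≤ 2k`, and the diagonal `s = s'` alone contributes
`|Aut H|⁻² ∑_s M_H(s) p^k (1 - p^k) = |Aut H|⁻¹ (1 - p^k) p^k N(H,G)`. When `H` has a vertex
and `p ≤ c < 1`, `1 - p^k ≥ 1 - c`.
-/

section SamplingModel

variable {V : Type*} [Fintype V] [DecidableEq V] (p : ℝ)

def var (f : (V → Bool) → ℝ) : ℝ :=
  expec p (fun ω => (f ω - expec p f) ^ 2)

lemma expec_add (f g : (V → Bool) → ℝ) :
    expec p (fun ω => f ω + g ω) = expec p f + expec p g := by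
  simp only [expec, mul_add, Finset.sum_add_distrib]

lemma expec_const_mul (a : ℝ) (f : (V → Bool) → ℝ) :
    expec p (fun ω => a * f ω) = a * expec p f := by
  simp only [expec, Finset.mul_sum, mul_left_comm]

lemma expec_sum {ι : Type*} (t : Finset ι) (f : ι → (V → Bool) → ℝ) :
    expec p (fun ω => ∑ i ∈ t, f i ω) = ∑ i ∈ t, expec p (f i) := by
  simp only [expec, Finset.mul_sum]
  exact Finset.sum_comm

lemma expec_prod_boole (A : Finset V) :
    expec p (fun ω => ∏ u ∈ A, if ω u then (1 : ℝ) else 0) = p ^ #A := by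
  have factorwise : ∀ ω : V → Bool,
      wt p ω * ∏ u ∈ A, (if ω u then (1 : ℝ) else 0) =
        ∏ v, (if ω v then p else 1 - p) * (if v ∈ A then (if ω v then 1 else 0) else 1) := by
    intro ω
    rw [Finset.prod_mul_distrib, Fintype.prod_ite_mem, wt]
  have marginal : ∀ v : V,
      ∑ b : Bool, (if b then p else 1 - p) * (if v ∈ A then (if b then 1 else 0) else 1) =
        if v ∈ A then p else 1 := by
    intro v
    by_cases hv : v ∈ A <;> simp [hv]
  rw [expec, Finset.sum_congr rfl fun ω _ => factorwise ω,
    ← Fintype.prod_sum (fun v (b : Bool) =>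
      (if b then p else 1 - p) * (if v ∈ A then (if b then (1 : ℝ) else 0) else 1))]
  simp only [marginal, Fintype.prod_ite_mem, Finset.prod_const]

lemma expec_const (a : ℝ) : expec p (fun _ : V → Bool => a) = a := by
  have total_mass := expec_prod_boole (V := V) p ∅
  simp only [Finset.prod_empty, Finset.card_empty, pow_zero] at total_mass
  simpa [total_mass] using expec_const_mul p a (fun _ : V → Bool => 1)

lemma var_eq_expec_sq_sub (f : (V → Bool) → ℝ) :
    var p f = expec p (fun ω => f ω ^ 2) - expec p f ^ 2 := by
  have expand : ∀ ω, (f ω - expec p f) ^ 2 =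
      (f ω ^ 2 + (-2 * expec p f) * f ω) + expec p f ^ 2 := fun ω => by ring
  rw [var, funext expand, expec_add, expec_add, expec_const_mul, expec_const]
  ring

end SamplingModel

lemma card_iso_self_pos {W : Type*} [Finite W] (H : SimpleGraph W) :
    0 < Nat.card (H ≃g H) :=
  have : Finite (H ≃g H) := Finite.of_injective _ DFunLike.coe_injective
  have : Nonempty (H ≃g H) := ⟨SimpleGraph.Iso.refl⟩
  Nat.card_pos

section SubgraphCount

variable {k : ℕ} {V : Type*}
  (H : SimpleGraph (Fin k)) [DecidableRel H.Adj] (G : SimpleGraph V) [DecidableRel G.Adj]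

lemma MH_eq_zero_or_one (s : Fin k ↪ V) : MH H G s = 0 ∨ MH H G s = 1 := by
  have closed : ∀ a b : ℝ, (a = 0 ∨ a = 1) → (b = 0 ∨ b = 1) → a * b = 0 ∨ a * b = 1 := by
    rintro a b (rfl | rfl) hb <;> simp [hb]
  refine Finset.prod_induction _ _ closed (Or.inr rfl) fun i _ => ?_
  refine Finset.prod_induction _ _ closed (Or.inr rfl) fun j _ => ?_
  split_ifs <;> simp

lemma MH_nonneg (s : Fin k ↪ V) : 0 ≤ MH H G s := by
  rcases MH_eq_zero_or_one H G s with h | h <;> simp [h]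

lemma MH_mul_self (s : Fin k ↪ V) : MH H G s * MH H G s = MH H G s := by
  rcases MH_eq_zero_or_one H G s with h | h <;> simp [h]

variable [DecidableEq V]

lemma pow_mul_pow_le_pow_card_union {p : ℝ} (hp0 : 0 ≤ p) (hp1 : p ≤ 1) (s s' : Fin k ↪ V) :
    p ^ k * p ^ k ≤ p ^ #(univ.map s ∪ univ.map s') := by
  rw [← pow_add]
  refine pow_le_pow_of_le_one hp0 hp1 ((card_union_le _ _).trans ?_)
  simp

variable [Fintype V]

lemma NHG_nonneg : 0 ≤ NHG H G :=
  mul_nonneg (by positivity) (Finset.sum_nonneg fun s _ => MH_nonneg H G s)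

lemma Xs_mul_Xs (s s' : Fin k ↪ V) (ω : V → Bool) :
    Xs s ω * Xs s' ω = ∏ u ∈ univ.map s ∪ univ.map s', if ω u then (1 : ℝ) else 0 := by
  simp only [Xs, Finset.prod_boole, ite_zero_mul_ite_zero, one_mul,
    Finset.forall_mem_union]

lemma expec_Xs (p : ℝ) (s : Fin k ↪ V) : expec p (Xs s) = p ^ k := by
  exact (expec_prod_boole p (univ.map s)).trans (by simp)

lemma expec_Xs_mul_Xs (p : ℝ) (s s' : Fin k ↪ V) :
    expec p (fun ω => Xs s ω * Xs s' ω) = p ^ #(univ.map s ∪ univ.map s') := by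
  simp only [Xs_mul_Xs, expec_prod_boole]

lemma expec_TH (p : ℝ) :
    expec p (TH H G) = (Nat.card (H ≃g H) : ℝ)⁻¹ * ∑ s : Fin k ↪ V, MH H G s * p ^ k := by
  unfold TH
  simp only [expec_const_mul, expec_sum, expec_Xs]

lemma expec_TH_sq (p : ℝ) :
    expec p (fun ω => TH H G ω ^ 2) = (Nat.card (H ≃g H) : ℝ)⁻¹ ^ 2 *
      ∑ s : Fin k ↪ V, ∑ s' : Fin k ↪ V,
        MH H G s * MH H G s' * p ^ #(univ.map s ∪ univ.map s') := by
  have expand : ∀ ω, TH H G ω ^ 2 = (Nat.card (H ≃g H) : ℝ)⁻¹ ^ 2 *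
      ∑ s : Fin k ↪ V, ∑ s' : Fin k ↪ V, MH H G s * MH H G s' * (Xs s ω * Xs s' ω) := by
    intro ω
    rw [TH, mul_pow, sq (∑ s, _), Finset.sum_mul_sum]
    congr 1
    exact Finset.sum_congr rfl fun s _ => Finset.sum_congr rfl fun s' _ => by ring
  simp only [expand, expec_const_mul, expec_sum, expec_Xs_mul_Xs]

lemma var_TH_eq (p : ℝ) :
    var p (TH H G) = (Nat.card (H ≃g H) : ℝ)⁻¹ ^ 2 *
      ∑ s : Fin k ↪ V, ∑ s' : Fin k ↪ V,
        MH H G s * MH H G s' * (p ^ #(univ.map s ∪ univ.map s') - p ^ k * p ^ k) := by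
  rw [var_eq_expec_sq_sub, expec_TH_sq, expec_TH, mul_pow, sq (∑ s, _), Finset.sum_mul_sum,
    ← mul_sub, ← Finset.sum_sub_distrib]
  congr 1
  refine Finset.sum_congr rfl fun s _ => ?_
  rw [← Finset.sum_sub_distrib]
  exact Finset.sum_congr rfl fun s' _ => by ring

lemma var_TH_ge {p : ℝ} (hp0 : 0 ≤ p) (hp1 : p ≤ 1) :
    (Nat.card (H ≃g H) : ℝ)⁻¹ * (1 - p ^ k) * (p ^ k * NHG H G) ≤ var p (TH H G) := by
  have diagonal_le : ∀ s : Fin k ↪ V, MH H G s * (p ^ k * (1 - p ^ k)) ≤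
      ∑ s' : Fin k ↪ V,
        MH H G s * MH H G s' * (p ^ #(univ.map s ∪ univ.map s') - p ^ k * p ^ k) := by
    intro s
    have term_nonneg : ∀ s' ∈ (univ : Finset (Fin k ↪ V)),
        0 ≤ MH H G s * MH H G s' * (p ^ #(univ.map s ∪ univ.map s') - p ^ k * p ^ k) :=
      fun s' _ => mul_nonneg (mul_nonneg (MH_nonneg H G s) (MH_nonneg H G s'))
        (sub_nonneg.mpr (pow_mul_pow_le_pow_card_union hp0 hp1 s s'))
    refine le_of_eq_of_le ?_ (Finset.single_le_sum term_nonneg (mem_univ s))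
    rw [MH_mul_self, union_self, card_map, card_univ, Fintype.card_fin]
    ring
  calc (Nat.card (H ≃g H) : ℝ)⁻¹ * (1 - p ^ k) * (p ^ k * NHG H G)
      = (Nat.card (H ≃g H) : ℝ)⁻¹ ^ 2 * ∑ s : Fin k ↪ V, MH H G s * (p ^ k * (1 - p ^ k)) := by
        rw [NHG, ← Finset.sum_mul]
        ring
    _ ≤ var p (TH H G) := by
        rw [var_TH_eq]
        exact mul_le_mul_of_nonneg_left (Finset.sum_le_sum fun s _ => diagonal_le s)
          (by positivity)

end SubgraphCount

theorem stmt16_general {k : ℕ} (H : SimpleGraph (Fin k)) [DecidableRel H.Adj]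
    (hconn : H.Connected)
    (V : ℕ → Type) [∀ n, Fintype (V n)] [∀ n, DecidableEq (V n)]
    (G : ∀ n, SimpleGraph (V n)) [∀ n, DecidableRel (G n).Adj]
    (p : ℕ → ℝ) (hp0 : ∀ n, 0 < p n)
    (c : ℝ) (hc : c < 1) (hpc : ∀ n, p n ≤ c) :
    ∃ C > (0 : ℝ), ∀ n,
      C * (p n ^ k * NHG H (G n)) ≤
        expec (p n) (fun ω => (TH H (G n) ω - expec (p n) (TH H (G n))) ^ 2) := by
  have hk : k ≠ 0 := by simpa using (Fintype.card_pos_iff.mpr hconn.nonempty).ne'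
  have haut : (0 : ℝ) < Nat.card (H ≃g H) := by exact_mod_cast card_iso_self_pos H
  refine ⟨(Nat.card (H ≃g H) : ℝ)⁻¹ * (1 - c), mul_pos (inv_pos.mpr haut) (sub_pos.mpr hc),
    fun n => ?_⟩
  have hp1 : p n ≤ 1 := (hpc n).trans hc.le
  have hpk : p n ^ k ≤ c := (pow_le_of_le_one (hp0 n).le hp1 hk).trans (hpc n)
  calc (Nat.card (H ≃g H) : ℝ)⁻¹ * (1 - c) * (p n ^ k * NHG H (G n))
      ≤ (Nat.card (H ≃g H) : ℝ)⁻¹ * (1 - p n ^ k) * (p n ^ k * NHG H (G n)) :=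
        mul_le_mul_of_nonneg_right (by gcongr)
          (mul_nonneg (pow_nonneg (hp0 n).le k) (NHG_nonneg H (G n)))
    _ ≤ _ := var_TH_ge H (G n) (hp0 n).le hp1

/-- For a sequence of graphs with maximum degree uniformly bounded by `Δ` and sampling
ratios `p_n` bounded away from `1`, if `p_n^{|V(H)|} N(H,G_n) → ∞`, then
`Var[T(H,G_n)] ≥ c(H) p_n^{|V(H)|} N(H,G_n)` for a constant `c > 0`. -/
theorem stmt16 {k : ℕ} (H : SimpleGraph (Fin k)) [DecidableRel H.Adj]
    (hconn : H.Connected) (Δ : ℕ)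
    (V : ℕ → Type) [∀ n, Fintype (V n)] [∀ n, DecidableEq (V n)]
    (G : ∀ n, SimpleGraph (V n)) [∀ n, DecidableRel (G n).Adj]
    (hdeg : ∀ n (v : V n), (G n).degree v ≤ Δ)
    (p : ℕ → ℝ) (hp0 : ∀ n, 0 < p n)
    (c : ℝ) (hc : c < 1) (hpc : ∀ n, p n ≤ c)
    (hlim : Filter.Tendsto (fun n => p n ^ k * NHG H (G n)) Filter.atTop Filter.atTop) :
    ∃ C > (0 : ℝ), ∀ n,
      C * (p n ^ k * NHG H (G n)) ≤
        expec (p n) (fun ω => (TH H (G n) ω - expec (p n) (TH H (G n))) ^ 2) :=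
  stmt16_general H hconn V G p hp0 c hc hpc
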